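/- arXiv:1312.1036 — 2 statements merged into one kernel-verified Lean document; each statement's English description precedes it below -/
import Mathlib

section
/- Let C = ∪_{k≥0} [3·5^k, 5·5^k) ∩ ℕ. Then for every integer ℓ, R(C) ∩ [(5/3)·5^ℓ, (3/5)·5^{ℓ+1}] = ∅; in particular R(C) is not dense in [0,∞). -/
/-- The quotient (ratio) set of a set of naturals, viewed in ℝ. -/
def ratioSet (A : Set ℕ) : Set ℝ := {x : ℝ | ∃ m ∈ A, ∃ n ∈ A, x = (m : ℝ) / (n : ℝ)}

/-- Lower asymptotic density of a set of naturals. -/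
noncomputable def lowerDensity (A : Set ℕ) : ℝ :=
  Filter.liminf (fun n : ℕ => (Nat.card ↥(A ∩ Set.Icc 1 n) : ℝ) / (n : ℝ)) Filter.atTop

/-- Upper asymptotic density of a set of naturals. -/
noncomputable def upperDensity (A : Set ℕ) : ℝ :=
  Filter.limsup (fun n : ℕ => (Nat.card ↥(A ∩ Set.Icc 1 n) : ℝ) / (n : ℝ)) Filter.atTop

/-! A ratio m / n with m ∈ [a bʲ, b ^ (j + 1)) and n ∈ [a bᵏ, b ^ (k + 1)) lies strictly between
(a / b) bᵈ and (b / a) bᵈ, where d = j - k. Consecutive such windows leave the gap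
[(b / a) bˡ, (a / b) b ^ (l + 1)] uncovered, which for a = 3, b = 5 is a nondegenerate interval. -/

def leadingDigitGE (b a : ℕ) : Set ℕ := {n | ∃ k : ℕ, a * b ^ k ≤ n ∧ n < b * b ^ k}

open Set

lemma Ioo_zpow_inter_Icc_zpow_eq_empty {r b : ℝ} (hr : 0 < r) (hb : 1 < b) (d l : ℤ) :
    Ioo (r * b ^ d) (r⁻¹ * b ^ d) ∩ Icc (r⁻¹ * b ^ l) (r * b ^ (l + 1)) = ∅ := by
  refine eq_empty_of_forall_notMem fun x ⟨⟨hlo, hhi⟩, hl, hu⟩ => ?_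
  have hld : l < d := (zpow_lt_zpow_iff_right₀ hb).1 <|
    (mul_lt_mul_iff_of_pos_left (inv_pos.2 hr)).1 (hl.trans_lt hhi)
  have hdl : d < l + 1 := (zpow_lt_zpow_iff_right₀ hb).1 <|
    (mul_lt_mul_iff_of_pos_left hr).1 (hlo.trans_le hu)
  omega

section

variable {a b : ℕ}

lemma div_mem_Ioo_of_mem_leadingDigitGE (ha : 0 < a) (hb : 0 < b) {m n j k : ℕ}
    (hm : a * b ^ j ≤ m ∧ m < b * b ^ j) (hn : a * b ^ k ≤ n ∧ n < b * b ^ k) :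
    (m / n : ℝ) ∈ Ioo ((a / b : ℝ) * (b : ℝ) ^ ((j : ℤ) - k))
      ((b / a : ℝ) * (b : ℝ) ^ ((j : ℤ) - k)) := by
  have hb' : (b : ℝ) ≠ 0 := by positivity
  have hm₁ : (a : ℝ) * b ^ j ≤ m := by exact_mod_cast hm.1
  have hm₂ : (m : ℝ) < b * b ^ j := by exact_mod_cast hm.2
  have hn₁ : (a : ℝ) * b ^ k ≤ n := by exact_mod_cast hn.1
  have hn₂ : (n : ℝ) < b * b ^ k := by exact_mod_cast hn.2
  have hm₀ : (0 : ℝ) < m := (by positivity : (0 : ℝ) < a * b ^ j).trans_le hm₁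
  have hn₀ : (0 : ℝ) < n := (by positivity : (0 : ℝ) < a * b ^ k).trans_le hn₁
  have hscale (c e : ℝ) : c / e * (b : ℝ) ^ ((j : ℤ) - k) = c * b ^ j / (e * b ^ k) := by
    rw [zpow_sub₀ hb', zpow_natCast, zpow_natCast]
    ring
  rw [hscale, hscale]
  exact ⟨div_lt_div₀' hm₁ hn₂ hm₀ hn₀, div_lt_div₀ hm₂ hn₁ (by positivity) (by positivity)⟩

lemma ratioSet_leadingDigitGE_subset (ha : 0 < a) (hb : 0 < b) :
    ratioSet (leadingDigitGE b a) ⊆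
      ⋃ d : ℤ, Ioo ((a / b : ℝ) * (b : ℝ) ^ d) ((b / a : ℝ) * (b : ℝ) ^ d) := by
  rintro x ⟨m, ⟨j, hm⟩, n, ⟨k, hn⟩, rfl⟩
  exact mem_iUnion.2 ⟨j - k, div_mem_Ioo_of_mem_leadingDigitGE ha hb hm hn⟩

lemma ratioSet_leadingDigitGE_inter_Icc_eq_empty (ha : 0 < a) (hb : 1 < b) (l : ℤ) :
    ratioSet (leadingDigitGE b a) ∩
      Icc ((b / a : ℝ) * (b : ℝ) ^ l) ((a / b : ℝ) * (b : ℝ) ^ (l + 1)) = ∅ := by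
  have hr : (0 : ℝ) < a / b := by positivity
  have hb' : (1 : ℝ) < b := by exact_mod_cast hb
  rw [← inv_div (a : ℝ) b]
  refine eq_empty_of_subset_empty fun x ⟨hx, hxl⟩ => ?_
  obtain ⟨d, hd⟩ := mem_iUnion.1 (ratioSet_leadingDigitGE_subset ha (by omega) hx)
  rw [← inv_div (a : ℝ) b] at hd
  rw [← Ioo_zpow_inter_Icc_zpow_eq_empty hr hb' d l]
  exact ⟨hd, hxl⟩

end

lemma not_Ici_subset_closure_of_inter_Icc_eq_empty {S : Set ℝ} {u v : ℝ} (hu : 0 ≤ u)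
    (huv : u < v) (hS : S ∩ Icc u v = ∅) : ¬ Ici 0 ⊆ closure S := by
  intro hdense
  have hgap : Disjoint (Ioo u v) (closure S) := by
    refine Disjoint.closure_right ?_ isOpen_Ioo
    rw [disjoint_iff_inter_eq_empty, inter_comm]
    exact subset_eq_empty (inter_subset_inter_right S Ioo_subset_Icc_self) hS
  have hmid : (u + v) / 2 ∈ Ioo u v := ⟨by linarith, by linarith⟩
  exact hgap.notMem_of_mem_left hmid (hdense (by simp only [mem_Ici]; linarith))

theorem stmt10 :
    (∀ l : ℤ,
      ratioSet {n : ℕ | ∃ k : ℕ, 3 * 5 ^ k ≤ n ∧ n < 5 * 5 ^ k} ∩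
        Set.Icc ((5 / 3 : ℝ) * (5 : ℝ) ^ l) ((3 / 5 : ℝ) * (5 : ℝ) ^ (l + 1)) = ∅) ∧
    ¬ (Set.Ici (0 : ℝ) ⊆
        closure (ratioSet {n : ℕ | ∃ k : ℕ, 3 * 5 ^ k ≤ n ∧ n < 5 * 5 ^ k})) := by
  have hgap (l : ℤ) := ratioSet_leadingDigitGE_inter_Icc_eq_empty (a := 3) (b := 5)
    (by norm_num) (by norm_num) l
  push_cast at hgap
  have hgap₀ : ratioSet (leadingDigitGE 5 3) ∩ Icc (5 / 3) 3 = ∅ := by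
    simpa using hgap 0
  exact ⟨hgap, not_Ici_subset_closure_of_inter_Icc_eq_empty (by norm_num) (by norm_num) hgap₀⟩
end

section
/- There exists a subset A of ℕ that contains arbitrarily long arithmetic progressions (indeed arbitrarily long blocks of consecutive integers) but whose quotient set R(A) is not dense in [0,∞). -/
/-! The set `A = ⋃ₖ [bᵏ, c·bᵏ)` with `c² < b` contains longer and longer blocks of consecutive
integers, but any ratio of two of its elements is either at most `c` (numerator from an earlier or
the same block) or at least `b / c` (numerator from a later block), so `R(A)` misses `(c, b / c)`. -/

open Set

def geomBlocks (b c : ℕ) : Set ℕ := {n | ∃ k : ℕ, b ^ k ≤ n ∧ n < c * b ^ k}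

section geomBlocks

variable {b c : ℕ}

lemma zero_notMem_geomBlocks (hb : 0 < b) : 0 ∉ geomBlocks b c := by
  rintro ⟨k, hk, -⟩
  exact (pow_pos hb k).not_ge hk

lemma exists_consecutive_subset_geomBlocks (hb : 1 < b) (hc : 2 ≤ c) (L : ℕ) :
    ∃ a : ℕ, 0 < a ∧ ∀ i < L, a + i ∈ geomBlocks b c := by
  refine ⟨b ^ L, pow_pos (by omega) L, fun i hi => ⟨L, Nat.le_add_right _ _, ?_⟩⟩
  have hL : L < b ^ L := Nat.lt_pow_self hb
  have h2c : 2 * b ^ L ≤ c * b ^ L := Nat.mul_le_mul_right _ hc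
  omega

lemma ratioSet_geomBlocks_subset (hb : 0 < b) (hc : 0 < c) :
    ratioSet (geomBlocks b c) ⊆ (Ioo (c : ℝ) (b / c))ᶜ := by
  rintro x ⟨m, ⟨j, hjm, hmj⟩, n, ⟨k, hkn, hnk⟩, rfl⟩ ⟨hcx, hxb⟩
  have hn : (0 : ℝ) < n := by exact_mod_cast (pow_pos hb k).trans_le hkn
  rcases le_or_gt j k with hjk | hkj
  · have hmn : m ≤ c * n :=
      calc m ≤ c * b ^ j := hmj.le
        _ ≤ c * b ^ k := Nat.mul_le_mul_left _ (Nat.pow_le_pow_right hb hjk)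
        _ ≤ c * n := Nat.mul_le_mul_left _ hkn
    rw [lt_div_iff₀ hn] at hcx
    have : (m : ℝ) ≤ c * n := by exact_mod_cast hmn
    linarith
  · have hnm : b * n ≤ c * m :=
      calc b * n ≤ b * (c * b ^ k) := Nat.mul_le_mul_left _ hnk.le
        _ = c * b ^ (k + 1) := by ring
        _ ≤ c * b ^ j := Nat.mul_le_mul_left _ (Nat.pow_le_pow_right hb hkj)
        _ ≤ c * m := Nat.mul_le_mul_left _ hjm
    have hc' : (0 : ℝ) < c := by exact_mod_cast hc
    rw [div_lt_div_iff₀ hn hc'] at hxb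
    have : (b : ℝ) * n ≤ c * m := by exact_mod_cast hnm
    linarith

lemma closure_ratioSet_geomBlocks_subset (hb : 0 < b) (hc : 0 < c) :
    closure (ratioSet (geomBlocks b c)) ⊆ (Ioo (c : ℝ) (b / c))ᶜ :=
  closure_minimal (ratioSet_geomBlocks_subset hb hc) isOpen_Ioo.isClosed_compl

end geomBlocks

theorem stmt17 :
    ∃ A : Set ℕ, 0 ∉ A ∧
      (∀ L : ℕ, ∃ a : ℕ, 0 < a ∧ ∀ i < L, a + i ∈ A) ∧
      ¬ (Set.Ici (0 : ℝ) ⊆ closure (ratioSet A)) := by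
  refine ⟨geomBlocks 5 2, zero_notMem_geomBlocks (by norm_num),
    exists_consecutive_subset_geomBlocks (by norm_num) le_rfl, fun hdense => ?_⟩
  have hgap : (9 / 4 : ℝ) ∈ Ioo ((2 : ℕ) : ℝ) ((5 : ℕ) / (2 : ℕ)) := by norm_num
  exact closure_ratioSet_geomBlocks_subset (by norm_num) (by norm_num)
    (hdense (by norm_num : (0 : ℝ) ≤ 9 / 4)) hgap
end
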